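/- arXiv:1002.4533 — 3 statements merged into one kernel-verified Lean document; each statement's English description precedes it below -/
import Mathlib

section
/- Let f(x; θ) = exp(θ b(x) − A(θ)) be a one-parameter exponential family and q > 0 with θ₀/q in the natural parameter space. Then the surrogate parameter θ* solving E_{θ₀}[U(X;θ*) f(X;θ*)^{1−q}] = 0, where U(x;θ) = b(x) − A'(θ), is given by θ* = θ₀/q. -/
/-!
Since `θ₀ + (1 - q) (θ₀ / q) = θ₀ / q`, the weight `f(x;θ₀) f(x;θ₀/q)^(1-q)` is a constant multiple
of `exp((θ₀/q) b(x))`. The equation therefore reduces to the unnormalised score identity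
`∫ (b - A'(t)) e^{t b} dμ = Z'(t) - A'(t) Z(t) = 0` at `t = θ₀ / q`, where `Z` is the partition
function and `A = log Z`.
-/

open MeasureTheory Real

theorem exp_sub_mul_exp_div_sub_rpow {q : ℝ} (hq : q ≠ 0) (θ y a c : ℝ) :
    exp (θ * y - a) * exp (θ / q * y - c) ^ (1 - q) =
      exp (θ / q * y) * exp (-a - (1 - q) * c) := by
  rw [← exp_mul, ← exp_add, ← exp_add]
  congr 1
  field_simp
  ring

theorem integral_sub_deriv_log_partition_mul_exp_eq_zero {Ω : Type*} [MeasurableSpace Ω]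
    {μ : Measure Ω} {b : Ω → ℝ} {t : ℝ}
    (hpos : 0 < ∫ x, exp (t * b x) ∂μ)
    (hbint : Integrable (fun x => b x * exp (t * b x)) μ)
    (hderiv : HasDerivAt (fun η => ∫ x, exp (η * b x) ∂μ) (∫ x, b x * exp (t * b x) ∂μ) t) :
    ∫ x, (b x - deriv (fun η => log (∫ x, exp (η * b x) ∂μ)) t) * exp (t * b x) ∂μ = 0 := by
  have hexpint : Integrable (fun x => exp (t * b x)) μ :=
    Integrable.of_integral_ne_zero hpos.ne'
  rw [(hderiv.log hpos.ne').deriv]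
  simp only [sub_mul]
  rw [integral_sub hbint (hexpint.const_mul _), integral_const_mul,
    div_mul_cancel₀ _ hpos.ne', sub_self]

theorem stmt4_general {Ω : Type*} [MeasurableSpace Ω] (μ : Measure Ω)
    (b : Ω → ℝ) (θ₀ q : ℝ) (hq : 0 < q)
    (A : ℝ → ℝ) (hA : ∀ η, A η = Real.log (∫ x, Real.exp (η * b x) ∂μ))
    (hpos : ∀ η, 0 < ∫ x, Real.exp (η * b x) ∂μ)
    (hbint : Integrable (fun x => b x * Real.exp ((θ₀ / q) * b x)) μ)
    (hderiv : HasDerivAt (fun η => ∫ x, Real.exp (η * b x) ∂μ)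
      (∫ x, b x * Real.exp ((θ₀ / q) * b x) ∂μ) (θ₀ / q)) :
    ∫ x, (b x - deriv A (θ₀ / q)) * Real.exp (θ₀ * b x - A θ₀) *
      Real.exp ((θ₀ / q) * b x - A (θ₀ / q)) ^ (1 - q) ∂μ = 0 := by
  obtain rfl : A = fun η => log (∫ x, exp (η * b x) ∂μ) := funext hA
  simp_rw [mul_assoc, exp_sub_mul_exp_div_sub_rpow hq.ne', ← mul_assoc, integral_mul_const]
  rw [integral_sub_deriv_log_partition_mul_exp_eq_zero (hpos _) hbint hderiv, zero_mul]

/-- For a one-parameter exponential family `f(x;θ) = exp(θ b(x) − A(θ))`, the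
surrogate parameter solving `E_{θ₀}[U(X;θ*) f(X;θ*)^(1−q)] = 0` (with score
`U(x;θ) = b(x) − A'(θ)`) is `θ* = θ₀ / q`. -/
theorem stmt4 {Ω : Type*} [MeasurableSpace Ω] (μ : Measure Ω)
    (b : Ω → ℝ) (θ₀ q : ℝ) (hq : 0 < q)
    (A : ℝ → ℝ) (hA : ∀ η, A η = Real.log (∫ x, Real.exp (η * b x) ∂μ))
    (hpos : ∀ η, 0 < ∫ x, Real.exp (η * b x) ∂μ)
    (hbint : Integrable (fun x => b x * Real.exp ((θ₀ / q) * b x)) μ)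
    (hderiv : HasDerivAt (fun η => ∫ x, Real.exp (η * b x) ∂μ)
      (∫ x, b x * Real.exp ((θ₀ / q) * b x) ∂μ) (θ₀ / q))
    (hAderiv : DifferentiableAt ℝ A (θ₀ / q))
    (hint : Integrable (fun x => (b x - deriv A (θ₀ / q)) *
      Real.exp (θ₀ * b x - A θ₀) *
      Real.exp ((θ₀ / q) * b x - A (θ₀ / q)) ^ (1 - q)) μ) :
    ∫ x, (b x - deriv A (θ₀ / q)) * Real.exp (θ₀ * b x - A θ₀) *
      Real.exp ((θ₀ / q) * b x - A (θ₀ / q)) ^ (1 - q) ∂μ = 0 :=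
  stmt4_general μ b θ₀ q hq A hA hpos hbint hderiv
end

section
/- For the exponential distribution family f(x; λ) = λ e^{−λx} on (0,∞), the asymptotic variance of the MLqE of λ₀ equals σ² = (λ₀/q)² (q² − 2q + 2)/(q³(2 − q)³) for 0 < q < 2, and σ² → λ₀² as q → 1. -/
/-!
Put `c = λ₀/q`. Multiplied by the density `q c e^{-qcx}`, the factors `(c e^{-cx})^{1-q}` and
`(c e^{-cx})^{2(1-q)}` become `c^{1-q} e^{-cx}` and `c^{2(1-q)} e^{-c(2-q)x}`, while `∂_λ U*` is
`(λ e^{-λx})^{1-q}` times a quadratic in `x`. Hence `J` and `K` are combinations of the moments of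
order `≤ 2` of exponential densities, at rates `c` and `c(2-q)` respectively.
-/

open MeasureTheory Real Set

lemma integrableOn_pow_mul_exp_neg_mul_Ioi (n : ℕ) {a : ℝ} (ha : 0 < a) :
    IntegrableOn (fun x : ℝ => x ^ n * exp (-a * x)) (Ioi 0) := by
  refine (integrableOn_rpow_mul_exp_neg_mul_rpow (s := n) (by linarith [n.cast_nonneg (α := ℝ)])
    one_pos ha).congr_fun (fun x _ => ?_) measurableSet_Ioi
  simp only [rpow_one, rpow_natCast]

lemma integral_pow_mul_exp_neg_mul_Ioi (n : ℕ) {a : ℝ} (ha : 0 < a) :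
    ∫ x in Ioi (0 : ℝ), x ^ n * exp (-a * x) = n.factorial / a ^ (n + 1) := by
  have h := integral_rpow_mul_exp_neg_mul_Ioi (a := n + 1) (by positivity) ha
  simp only [add_sub_cancel_right, rpow_natCast, ← neg_mul] at h
  rw [h, Gamma_nat_eq_factorial, show ((n : ℝ) + 1) = ((n + 1 : ℕ) : ℝ) by push_cast; ring,
    rpow_natCast, div_pow, one_pow]
  field_simp

lemma integral_quadratic_mul_exp_neg_mul_Ioi {a : ℝ} (ha : 0 < a) (α β γ : ℝ) :
    ∫ x in Ioi (0 : ℝ), (α + β * x + γ * x ^ 2) * exp (-a * x)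
      = α / a + β / a ^ 2 + 2 * γ / a ^ 3 := by
  have hmom (n : ℕ) := integrableOn_pow_mul_exp_neg_mul_Ioi n ha
  have hsplit : ∀ x : ℝ, (α + β * x + γ * x ^ 2) * exp (-a * x)
      = α * (x ^ 0 * exp (-a * x)) + β * (x ^ 1 * exp (-a * x)) + γ * (x ^ 2 * exp (-a * x)) := by
    intro x; ring
  simp_rw [hsplit]
  rw [integral_add, integral_add, integral_const_mul, integral_const_mul, integral_const_mul,
    integral_pow_mul_exp_neg_mul_Ioi 0 ha, integral_pow_mul_exp_neg_mul_Ioi 1 ha,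
    integral_pow_mul_exp_neg_mul_Ioi 2 ha]
  · norm_num [Nat.factorial]
    ring
  exacts [(hmom 0).const_mul α, (hmom 1).const_mul β,
    ((hmom 0).const_mul α).add ((hmom 1).const_mul β), (hmom 2).const_mul γ]

lemma mul_exp_neg_mul_rpow {c : ℝ} (hc : 0 < c) (x p : ℝ) :
    (c * exp (-c * x)) ^ p = c ^ p * exp (-(p * c) * x) := by
  rw [mul_rpow hc.le (exp_pos _).le, ← exp_mul]
  ring_nf

lemma hasDerivAt_score (x p : ℝ) {l : ℝ} (hl : 0 < l) :
    HasDerivAt (fun l => (1 / l - x) * (l * exp (-l * x)) ^ p)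
      ((l * exp (-l * x)) ^ p * (p * (1 / l - x) ^ 2 - 1 / l ^ 2)) l := by
  have hinv : HasDerivAt (fun l : ℝ => 1 / l - x) (-(l ^ 2)⁻¹) l := by
    simpa [one_div] using (hasDerivAt_inv hl.ne').sub_const x
  have hdens : HasDerivAt (fun l => l * exp (-l * x)) (exp (-l * x) * (1 - l * x)) l := by
    refine ((hasDerivAt_id l).mul ((hasDerivAt_id l).neg.mul_const x).exp).congr_deriv ?_
    simp only [Pi.neg_apply, id_eq, neg_mul, one_mul]
    ring
  refine (hinv.mul (hdens.rpow_const (p := p) (Or.inl (by positivity)))).congr_deriv ?_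
  rw [rpow_sub_one (by positivity)]
  field_simp
  ring

lemma integral_sq_score_mul_density {c q : ℝ} (hc : 0 < c) (hq : q < 2) :
    ∫ x in Ioi (0 : ℝ),
        ((1 / c - x) * (c * exp (-c * x)) ^ (1 - q)) ^ 2 * (q * c * exp (-(q * c) * x))
      = q * (c ^ (1 - q)) ^ 2 * (q ^ 2 - 2 * q + 2) / (c ^ 2 * (2 - q) ^ 3) := by
  set t := c ^ (1 - q)
  have hpt : ∀ x : ℝ,
      ((1 / c - x) * (c * exp (-c * x)) ^ (1 - q)) ^ 2 * (q * c * exp (-(q * c) * x))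
        = (q * t ^ 2 / c + (-2 * q * t ^ 2) * x + q * c * t ^ 2 * x ^ 2)
          * exp (-(c * (2 - q)) * x) := by
    intro x
    rw [mul_exp_neg_mul_rpow hc, show -(c * (2 - q)) * x
      = -((1 - q) * c) * x + -((1 - q) * c) * x + -(q * c) * x by ring, exp_add, exp_add]
    field_simp
    ring
  simp_rw [hpt]
  rw [integral_quadratic_mul_exp_neg_mul_Ioi (mul_pos hc (by linarith))]
  have : 2 - q ≠ 0 := by linarith
  field_simp
  ring

lemma integral_deriv_score_mul_density {c : ℝ} (hc : 0 < c) (q : ℝ) :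
    ∫ x in Ioi (0 : ℝ),
        deriv (fun l => (1 / l - x) * (l * exp (-l * x)) ^ (1 - q)) c
          * (q * c * exp (-(q * c) * x))
      = -(q ^ 2 * c ^ (1 - q) / c ^ 2) := by
  set t := c ^ (1 - q)
  have hpt : ∀ x : ℝ,
      deriv (fun l => (1 / l - x) * (l * exp (-l * x)) ^ (1 - q)) c
          * (q * c * exp (-(q * c) * x))
        = (-(q ^ 2 * t / c) + (-2 * q * (1 - q) * t) * x + q * (1 - q) * c * t * x ^ 2)
          * exp (-c * x) := by
    intro x
    rw [(hasDerivAt_score x (1 - q) hc).deriv, mul_exp_neg_mul_rpow hc,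
      show -c * x = -((1 - q) * c) * x + -(q * c) * x by ring, exp_add]
    field_simp
    ring
  simp_rw [hpt]
  rw [integral_quadratic_mul_exp_neg_mul_Ioi hc]
  field_simp
  ring

theorem stmt6_general (lam0 q : ℝ) (h0 : 0 < q) (h2 : q < 2) (hl : 0 < lam0) :
    (∫ x in Set.Ioi (0 : ℝ),
        ((1 / (lam0 / q) - x) * ((lam0 / q) * Real.exp (-(lam0 / q) * x)) ^ (1 - q)) ^ 2 *
          (lam0 * Real.exp (-lam0 * x))) /
      (∫ x in Set.Ioi (0 : ℝ),
        deriv (fun l : ℝ => (1 / l - x) * (l * Real.exp (-l * x)) ^ (1 - q)) (lam0 / q) *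
          (lam0 * Real.exp (-lam0 * x))) ^ 2
      = (lam0 / q) ^ 2 * ((q ^ 2 - 2 * q + 2) / (q ^ 3 * (2 - q) ^ 3)) ∧
    Filter.Tendsto
      (fun s : ℝ => (lam0 / s) ^ 2 * ((s ^ 2 - 2 * s + 2) / (s ^ 3 * (2 - s) ^ 3)))
      (nhds 1) (nhds (lam0 ^ 2)) := by
  constructor
  · obtain ⟨c, hc, rfl⟩ : ∃ c, 0 < c ∧ lam0 = q * c :=
      ⟨lam0 / q, div_pos hl h0, by field_simp⟩
    rw [mul_div_cancel_left₀ c h0.ne', integral_sq_score_mul_density hc h2,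
      integral_deriv_score_mul_density hc]
    have ht : c ^ (1 - q) ≠ 0 := (rpow_pos_of_pos hc _).ne'
    have : 2 - q ≠ 0 := by linarith
    field_simp
  · have hcont : ContinuousAt
        (fun s : ℝ => (lam0 / s) ^ 2 * ((s ^ 2 - 2 * s + 2) / (s ^ 3 * (2 - s) ^ 3))) 1 := by
      fun_prop (disch := norm_num)
    convert hcont.tendsto using 2
    norm_num

/-- For the exponential family `f(x;λ) = λ e^{−λx}` on `(0,∞)`, the asymptotic
variance `V = K / J²` of the MLqE of `λ₀` (with surrogate `λ* = λ₀/q`,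
`U*(x;λ,q) = (1/λ − x)(λ e^{−λx})^(1−q)`) equals
`(λ₀/q)² (q² − 2q + 2)/(q³(2−q)³)` for `0 < q < 2`, and this expression tends to
`λ₀²` as `q → 1`. -/
theorem stmt6 (lam0 q : ℝ) (h0 : 0 < q) (h2 : q < 2) (hq1 : q ≠ 1) (hl : 0 < lam0) :
    (∫ x in Set.Ioi (0 : ℝ),
        ((1 / (lam0 / q) - x) * ((lam0 / q) * Real.exp (-(lam0 / q) * x)) ^ (1 - q)) ^ 2 *
          (lam0 * Real.exp (-lam0 * x))) /
      (∫ x in Set.Ioi (0 : ℝ),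
        deriv (fun l : ℝ => (1 / l - x) * (l * Real.exp (-l * x)) ^ (1 - q)) (lam0 / q) *
          (lam0 * Real.exp (-lam0 * x))) ^ 2
      = (lam0 / q) ^ 2 * ((q ^ 2 - 2 * q + 2) / (q ^ 3 * (2 - q) ^ 3)) ∧
    Filter.Tendsto
      (fun s : ℝ => (lam0 / s) ^ 2 * ((s ^ 2 - 2 * s + 2) / (s ^ 3 * (2 - s) ^ 3)))
      (nhds 1) (nhds (lam0 ^ 2)) :=
  stmt6_general lam0 q h0 h2 hl
end

section
/- Let θ* minimize θ ↦ D(f^{(r)} ∥ f_θ) where f^{(r)} is the escort of the true density and D is Kullback–Leibler divergence, and suppose f_{θ*} = f^{(r)} exactly (the family is closed under escort). Then for q = 1/r, θ* also minimizes the q-entropy H_q(f, f_θ) = −E_f[(f_θ(X)^{1−q} − 1)/(1−q)] over θ, in an exponential family f_θ(x) = exp(θᵀb(x) − A(θ)) assuming differentiation under the integral sign and positive-definiteness of ∇²A. -/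
/-!
In an exponential family, `∫ f_θ^s f_{θ₀} dμ = exp (A (s θ + θ₀) - s A θ - A θ₀)`, so
`H_q(θ₀, θ) = (1 - exp G(θ)) / (1 - q)` with `G(θ) = A ((1 - q) θ + θ₀) - (1 - q) A θ - A θ₀`.
Writing `θ₀ = q c`, the difference `G(θ) - G(c)` is the Jensen gap of the convex function `A`
at the weights `1 - q, q` on `θ, c`; it is `≤ 0` for `q ≤ 1` and, by extrapolation, `≥ 0` for
`q ≥ 1`. Either way `H_q(θ₀, θ) ≥ H_q(θ₀, c)`, so `c = θ₀ / q` is a global minimum.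
-/

open MeasureTheory Matrix Set

section Convexity

variable {E : Type*}

theorem convexOn_univ_of_forall_convexOn_line [AddCommGroup E] [Module ℝ E] {f : E → ℝ}
    (h : ∀ x v : E, ConvexOn ℝ univ fun t : ℝ => f (x + t • v)) : ConvexOn ℝ univ f := by
  refine ⟨convex_univ, fun x _ y _ a b ha hb hab => ?_⟩
  obtain rfl : a = 1 - b := by linarith
  have hline := (h x (y - x)).2 (mem_univ 0) (mem_univ 1) ha hb hab
  have hpt : x + b • (y - x) = (1 - b) • x + b • y := by module
  simpa [hpt] using hline

theorem convexOn_univ_of_iteratedFDeriv_two_nonneg [NormedAddCommGroup E] [NormedSpace ℝ E]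
    {f : E → ℝ} (hf : ContDiff ℝ 2 f) (h : ∀ x v, 0 ≤ iteratedFDeriv ℝ 2 f x ![v, v]) :
    ConvexOn ℝ univ f := by
  refine convexOn_univ_of_forall_convexOn_line fun x v => ?_
  have hline : ∀ t : ℝ, HasDerivAt (fun s : ℝ => x + s • v) v t := fun t => by
    simpa using ((hasDerivAt_id t).smul_const v).const_add x
  have hf' : ∀ t : ℝ, HasDerivAt (fun s : ℝ => f (x + s • v)) (fderiv ℝ f (x + t • v) v) t :=
    fun t => ((hf.differentiable (by norm_num)) _).hasFDerivAt.comp_hasDerivAt t (hline t)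
  have hf'' : ∀ t : ℝ, HasDerivAt (fun s : ℝ => fderiv ℝ f (x + s • v) v)
      (fderiv ℝ (fderiv ℝ f) (x + t • v) v v) t := fun t => by
    have hDf := ((hf.fderiv_right (m := 1) (by norm_num)).differentiable (by norm_num)
      (x + t • v)).hasFDerivAt.comp_hasDerivAt t (hline t)
    simpa using hDf.clm_apply (hasDerivAt_const t v)
  refine convexOn_of_hasDerivWithinAt2_nonneg convex_univ
    (fun t _ => (hf' t).continuousAt.continuousWithinAt)
    (fun t _ => (hf' t).hasDerivWithinAt) (fun t _ => (hf'' t).hasDerivWithinAt)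
    fun t _ => ?_
  simpa [iteratedFDeriv_two_apply] using h (x + t • v) v

variable [AddCommGroup E] [Module ℝ E] {φ : E → ℝ}

theorem ConvexOn.le_map_of_one_le (hφ : ConvexOn ℝ univ φ) {t : ℝ} (ht : 1 ≤ t) (x y : E) :
    (1 - t) * φ x + t * φ y ≤ φ ((1 - t) • x + t • y) := by
  have ht₀ : 0 < t := by linarith
  -- `y` is a convex combination of `x` and the extrapolated point `(1 - t) • x + t • y`.
  have hy : t⁻¹ • ((1 - t) • x + t • y) + (1 - t⁻¹) • x = y := by
    rw [smul_add, smul_smul, smul_smul, inv_mul_cancel₀ ht₀.ne', one_smul, add_comm,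
      ← add_assoc, ← add_smul]
    field_simp
    simp
  have hjensen := hφ.2 (mem_univ ((1 - t) • x + t • y)) (mem_univ x)
    (inv_nonneg.mpr ht₀.le) (sub_nonneg.mpr (inv_le_one_of_one_le₀ ht)) (by ring)
  rw [hy, smul_eq_mul, smul_eq_mul] at hjensen
  have := mul_le_mul_of_nonneg_left hjensen ht₀.le
  have hcoef : t * (1 - t⁻¹) = t - 1 := by field_simp
  rw [mul_add, ← mul_assoc, ← mul_assoc, mul_inv_cancel₀ ht₀.ne', one_mul, hcoef] at this
  linarith

theorem ConvexOn.one_sub_mul_jensen_gap_nonpos (hφ : ConvexOn ℝ univ φ) {t : ℝ} (ht : 0 ≤ t)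
    (x y : E) : (1 - t) * (φ ((1 - t) • x + t • y) - ((1 - t) * φ x + t * φ y)) ≤ 0 := by
  rcases le_total t 1 with ht1 | ht1
  · exact mul_nonpos_of_nonneg_of_nonpos (sub_nonneg.mpr ht1) <| sub_nonpos.mpr <|
      hφ.2 (mem_univ x) (mem_univ y) (sub_nonneg.mpr ht1) ht (by ring)
  · exact mul_nonpos_of_nonpos_of_nonneg (sub_nonpos.mpr ht1) <| sub_nonneg.mpr <|
      hφ.le_map_of_one_le ht1 x y

end Convexity

theorem Real.one_sub_exp_div_le_of_mul_sub_nonpos {a u v : ℝ} (h : a * (u - v) ≤ 0) :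
    (1 - Real.exp v) / a ≤ (1 - Real.exp u) / a := by
  rcases lt_trichotomy a 0 with ha | rfl | ha
  · have : v ≤ u := by nlinarith
    exact div_le_div_of_nonpos_of_le ha.le (by gcongr)
  · simp
  · have : u ≤ v := by nlinarith
    exact div_le_div_of_nonneg_right (by gcongr) ha.le

section ExponentialFamily

variable {Ω ι : Type*} [MeasurableSpace Ω] [Fintype ι] {μ : Measure Ω} {b : Ω → ι → ℝ}
  {A : (ι → ℝ) → ℝ}

theorem exp_dotProduct_sub_rpow_mul_exp (θ θ₀ y : ι → ℝ) (a a₀ s : ℝ) :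
    Real.exp (θ ⬝ᵥ y - a) ^ s * Real.exp (θ₀ ⬝ᵥ y - a₀)
      = Real.exp (-(s * a) - a₀) * Real.exp ((s • θ + θ₀) ⬝ᵥ y) := by
  rw [← Real.exp_mul, ← Real.exp_add, ← Real.exp_add, add_dotProduct, smul_dotProduct,
    smul_eq_mul]
  ring_nf

theorem integrable_exp_rpow_mul_exp (hint : ∀ θ, Integrable (fun x => Real.exp (θ ⬝ᵥ b x)) μ)
    (θ θ₀ : ι → ℝ) (s : ℝ) :
    Integrable (fun x => Real.exp (θ ⬝ᵥ b x - A θ) ^ s * Real.exp (θ₀ ⬝ᵥ b x - A θ₀)) μ := by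
  simp only [exp_dotProduct_sub_rpow_mul_exp]
  exact (hint _).const_mul _

theorem integral_exp_rpow_mul_exp (hpos : ∀ θ, 0 < ∫ x, Real.exp (θ ⬝ᵥ b x) ∂μ)
    (hA : ∀ θ, A θ = Real.log (∫ x, Real.exp (θ ⬝ᵥ b x) ∂μ)) (θ θ₀ : ι → ℝ) (s : ℝ) :
    ∫ x, Real.exp (θ ⬝ᵥ b x - A θ) ^ s * Real.exp (θ₀ ⬝ᵥ b x - A θ₀) ∂μ
      = Real.exp (A (s • θ + θ₀) - s * A θ - A θ₀) := by
  simp only [exp_dotProduct_sub_rpow_mul_exp]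
  rw [integral_const_mul, ← Real.exp_log (hpos _), ← hA, ← Real.exp_add]
  ring_nf

variable (μ b A) in
noncomputable def expFamilyQEntropy (q : ℝ) (θ₀ θ : ι → ℝ) : ℝ :=
  -∫ x, ((Real.exp (θ ⬝ᵥ b x - A θ)) ^ (1 - q) - 1) / (1 - q) * Real.exp (θ₀ ⬝ᵥ b x - A θ₀) ∂μ

variable (hint : ∀ θ, Integrable (fun x => Real.exp (θ ⬝ᵥ b x)) μ)
  (hpos : ∀ θ, 0 < ∫ x, Real.exp (θ ⬝ᵥ b x) ∂μ)
  (hA : ∀ θ, A θ = Real.log (∫ x, Real.exp (θ ⬝ᵥ b x) ∂μ))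
include hint hpos hA

theorem expFamilyQEntropy_eq (q : ℝ) (θ₀ θ : ι → ℝ) :
    expFamilyQEntropy μ b A q θ₀ θ
      = (1 - Real.exp (A ((1 - q) • θ + θ₀) - (1 - q) * A θ - A θ₀)) / (1 - q) := by
  have hintegrand : (fun x => ((Real.exp (θ ⬝ᵥ b x - A θ)) ^ (1 - q) - 1) / (1 - q) *
        Real.exp (θ₀ ⬝ᵥ b x - A θ₀))
      = fun x => (Real.exp (θ ⬝ᵥ b x - A θ) ^ (1 - q) * Real.exp (θ₀ ⬝ᵥ b x - A θ₀)
          - Real.exp (θ ⬝ᵥ b x - A θ) ^ (0 : ℝ) * Real.exp (θ₀ ⬝ᵥ b x - A θ₀)) / (1 - q) := by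
    ext x
    rw [Real.rpow_zero]
    ring
  rw [expFamilyQEntropy, hintegrand, integral_div, integral_sub
    (integrable_exp_rpow_mul_exp hint θ θ₀ _) (integrable_exp_rpow_mul_exp hint θ θ₀ _),
    integral_exp_rpow_mul_exp hpos hA, integral_exp_rpow_mul_exp hpos hA]
  simp only [zero_smul, zero_add, zero_mul, sub_zero, sub_self, Real.exp_zero]
  ring

theorem expFamilyQEntropy_le (hconv : ConvexOn ℝ univ A) {q : ℝ} (hq : 0 ≤ q) (c θ : ι → ℝ) :
    expFamilyQEntropy μ b A q (q • c) c ≤ expFamilyQEntropy μ b A q (q • c) θ := by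
  rw [expFamilyQEntropy_eq hint hpos hA, expFamilyQEntropy_eq hint hpos hA]
  apply Real.one_sub_exp_div_le_of_mul_sub_nonpos
  have hc : (1 - q) • c + q • c = c := by module
  convert hconv.one_sub_mul_jensen_gap_nonpos hq θ c using 2
  rw [hc]
  ring

end ExponentialFamily

theorem stmt19_general {Ω : Type*} [MeasurableSpace Ω] (μ : Measure Ω) (p : ℕ)
    (b : Ω → Fin p → ℝ) (θ₀ : Fin p → ℝ) (q r : ℝ)
    (hr : 0 < r) (hqr : q = 1 / r)
    (hint : ∀ θ : Fin p → ℝ, Integrable (fun x => Real.exp (θ ⬝ᵥ b x)) μ)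
    (hpos : ∀ θ : Fin p → ℝ, 0 < ∫ x, Real.exp (θ ⬝ᵥ b x) ∂μ)
    (A : (Fin p → ℝ) → ℝ)
    (hA : ∀ θ, A θ = Real.log (∫ x, Real.exp (θ ⬝ᵥ b x) ∂μ))
    (hAsmooth : ContDiff ℝ 2 A)
    (hPD : ∀ (θ : Fin p → ℝ) (v : Fin p → ℝ), v ≠ 0 →
      0 < iteratedFDeriv ℝ 2 A θ ![v, v])
    (Hq : (Fin p → ℝ) → ℝ)
    (hHq : ∀ θ, Hq θ = -∫ x,
      ((Real.exp (θ ⬝ᵥ b x - A θ)) ^ (1 - q) - 1) / (1 - q) *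
        Real.exp (θ₀ ⬝ᵥ b x - A θ₀) ∂μ) :
    fderiv ℝ Hq (q⁻¹ • θ₀) = 0 ∧ IsLocalMin Hq (q⁻¹ • θ₀) := by
  have hq : 0 < q := hqr ▸ one_div_pos.mpr hr
  have hconv : ConvexOn ℝ univ A :=
    convexOn_univ_of_iteratedFDeriv_two_nonneg hAsmooth fun θ v => by
      rcases eq_or_ne v 0 with rfl | hv
      · simp [iteratedFDeriv_two_apply]
      · exact (hPD θ v hv).le
  have hHq_eq : Hq = expFamilyQEntropy μ b A q θ₀ := funext hHq
  have hmin : IsLocalMin Hq (q⁻¹ • θ₀) := Filter.Eventually.of_forall fun θ => by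
    have := expFamilyQEntropy_le hint hpos hA hconv hq.le (q⁻¹ • θ₀) θ
    rwa [smul_inv_smul₀ hq.ne', ← hHq_eq] at this
  exact ⟨hmin.fderiv_eq_zero, hmin⟩

/-- In a full-rank exponential family `f_θ(x) = exp(θᵀ b(x) − A(θ))`, the
parameter `θ** = θ₀/q` (for which `f_{θ**}` is the escort `f_{θ₀}^{(1/q)}`,
the minimizer of `D(f^{(r)} ∥ f_θ)` with `q = 1/r`) also minimizes the
`q`-entropy `H_q(f_{θ₀}, f_θ) = −E_{θ₀}[(f_θ(X)^{1−q} − 1)/(1−q)]`: the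
first-order condition `∇_θ H_q = 0` holds at `θ₀/q` and it is a (local)
minimum, assuming smoothness of `A` and positive-definiteness of `∇²A`. -/
theorem stmt19 {Ω : Type*} [MeasurableSpace Ω] (μ : Measure Ω) (p : ℕ)
    (b : Ω → Fin p → ℝ) (θ₀ : Fin p → ℝ) (q r : ℝ)
    (hr : 0 < r) (hqr : q = 1 / r) (hq1 : q ≠ 1)
    (hint : ∀ θ : Fin p → ℝ, Integrable (fun x => Real.exp (θ ⬝ᵥ b x)) μ)
    (hpos : ∀ θ : Fin p → ℝ, 0 < ∫ x, Real.exp (θ ⬝ᵥ b x) ∂μ)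
    (A : (Fin p → ℝ) → ℝ)
    (hA : ∀ θ, A θ = Real.log (∫ x, Real.exp (θ ⬝ᵥ b x) ∂μ))
    (hAsmooth : ContDiff ℝ 2 A)
    (hPD : ∀ (θ : Fin p → ℝ) (v : Fin p → ℝ), v ≠ 0 →
      0 < iteratedFDeriv ℝ 2 A θ ![v, v])
    (Hq : (Fin p → ℝ) → ℝ)
    (hHq : ∀ θ, Hq θ = -∫ x,
      ((Real.exp (θ ⬝ᵥ b x - A θ)) ^ (1 - q) - 1) / (1 - q) *
        Real.exp (θ₀ ⬝ᵥ b x - A θ₀) ∂μ) :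
    fderiv ℝ Hq (q⁻¹ • θ₀) = 0 ∧ IsLocalMin Hq (q⁻¹ • θ₀) :=
  stmt19_general μ p b θ₀ q r hr hqr hint hpos A hA hAsmooth hPD Hq hHq
end
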